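/- Let M be a perfect matching of the infinite grid graph on Z^2, let C be a finite nonempty cycle in the grid graph whose edges alternately belong and do not belong to M, and let M' be the symmetric difference of M with the edge set of C (again a perfect matching). Then for every height function h of M there exist a height function h' of M' and δ in {4, −4} such that h' − h vanishes outside a finite set of plaquettes, takes only the values 0 and δ, and is not identically zero. In other words, a loop update along an alternating cycle shifts the heights uniformly by +4 or by −4 on a finite nonempty set of plaquettes and leaves all other heights unchanged. -/
import Mathlib


/-!
Dimer configurations (perfect matchings) on the infinite square grid `ℤ × ℤ` and their
height functions.

* A vertex is a point of `ℤ × ℤ`; the grid edge `(v, i)` joins `v` and `v + e i`, where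
  `e 0 = (1,0)` and `e 1 = (0,1)`.
* A plaquette is a point `p : ℤ × ℤ`, regarded as the unit square with corners
  `p, p+e 0, p+e 1, p+e 0+e 1`.
* A height function for a perfect matching `M` assigns an integer to every plaquette so that
  crossing a grid edge, keeping the even endpoint of that edge on the right, the height
  increases by `1` across an unoccupied edge and decreases by `3` across an occupied one.
-/

open scoped Classical
noncomputable section

namespace HQDM

/-- Vertices (and also plaquettes) of the infinite grid. -/
abbrev V : Type := ℤ × ℤ

/-- Grid edges: `(v, i)` is the edge joining `v` and `v + e i`. -/
abbrev E : Type := V × Fin 2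

/-- The two unit vectors. -/
def e : Fin 2 → V := fun i => if i = 0 then (1, 0) else (0, 1)

/-- The endpoints of an edge. -/
def ends (ed : E) : Set V := {ed.1, ed.1 + e ed.2}

/-- `M` is a perfect matching of the grid graph: every vertex lies on exactly one edge of `M`. -/
def IsPM (M : Set E) : Prop := ∀ w : V, ∃! ed : E, ed ∈ M ∧ w ∈ ends ed

/-- Sign of a vertex: `1` on even vertices, `-1` on odd ones. -/
def eps (v : V) : ℤ := if Even (v.1 + v.2) then 1 else -1

/-- `h : ℤ × ℤ → ℤ` is a height function for the matching `M`.  The two conditions encode, for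
the horizontal edge `(v, 0)` (separating plaquette `v` above from plaquette `v - (0,1)` below)
and the vertical edge `(v, 1)` (separating plaquette `v` on the right from plaquette `v - (1,0)`
on the left), the rule: crossing a grid edge keeping its even endpoint on the right, the height
changes by `+1` across an unoccupied edge and by `-3` across an occupied one. -/
def IsHeight (M : Set E) (h : V → ℤ) : Prop :=
  ∀ v : V,
    h (v - (0, 1)) - h v = (if (v, (0 : Fin 2)) ∈ M then (-3 : ℤ) else 1) * eps v ∧
    h (v - (1, 0)) - h v = (if (v, (1 : Fin 2)) ∈ M then (3 : ℤ) else -1) * eps v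

/-- Plaquette `p` hosts a horizontal parallel dimer pair in `M`. -/
def HostsH (M : Set E) (p : V) : Prop :=
  (p, (0 : Fin 2)) ∈ M ∧ (p + (0, 1), (0 : Fin 2)) ∈ M

/-- Plaquette `p` hosts a vertical parallel dimer pair in `M`. -/
def HostsV (M : Set E) (p : V) : Prop :=
  (p, (1 : Fin 2)) ∈ M ∧ (p + (1, 0), (1 : Fin 2)) ∈ M

/-- Plaquette `p` hosts a parallel pair (horizontal or vertical); i.e. `p` is flippable. -/
def HostsPar (M : Set E) (p : V) : Prop := HostsH M p ∨ HostsV M p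

/-- The four boundary edges of the plaquette `p`. -/
def plaqEdges (p : V) : Set E :=
  {(p, (0 : Fin 2)), (p + (0, 1), (0 : Fin 2)), (p, (1 : Fin 2)), (p + (1, 0), (1 : Fin 2))}

/-- Flipping the plaquette `p`: the horizontal pair is replaced by the vertical one, or
vice versa (as a set operation, the symmetric difference with the plaquette's boundary). -/
def flip (M : Set E) (p : V) : Set E := symmDiff M (plaqEdges p)

/-- `{p, p + 2 e i}` is a flippable pair of `M`: one of the two plaquettes hosts a horizontal
pair and the other a vertical pair. -/
def FlipPair (M : Set E) (p : V) (i : Fin 2) : Prop :=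
  (HostsH M p ∧ HostsV M (p + e i + e i)) ∨ (HostsV M p ∧ HostsH M (p + e i + e i))

/-- The hQDM move at the pair `{p, p + 2 e i}`: both plaquettes are flipped. -/
def move (M : Set E) (p : V) (i : Fin 2) : Set E :=
  symmDiff M (plaqEdges p ∪ plaqEdges (p + e i + e i))

end HQDM

namespace HQDM

/-- A finite nonempty cycle in the grid graph whose edges alternately belong and do not belong
to the matching `M`: a closed walk `c 0, c 1, …, c (2m-1), c 0` of pairwise distinct vertices,
with `ed j` the grid edge joining `c j` and `c (j+1)`, such that consecutive edges alternate
between `M` and its complement. -/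
structure AltCycle (M : Set E) where
  /-- half the length of the cycle -/
  m : ℕ
  hm : 0 < m
  /-- the (pairwise distinct) vertices of the cycle, in cyclic order -/
  c : ZMod (2 * m) → V
  inj : Function.Injective c
  /-- the edges of the cycle: `ed j` joins `c j` and `c (j + 1)` -/
  ed : ZMod (2 * m) → E
  adj : ∀ j : ZMod (2 * m),
    ((ed j).1 = c j ∧ c j + e (ed j).2 = c (j + 1)) ∨
    ((ed j).1 = c (j + 1) ∧ c (j + 1) + e (ed j).2 = c j)
  alt : ∀ j : ZMod (2 * m), ed j ∈ M ↔ ed (j + 1) ∉ M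
/-! ### Auxiliary development for the loop update theorem -/

section LoopAux

open Finset

variable {M : Set E} (γ : AltCycle M)

instance : NeZero (2 * γ.m) := ⟨by have := γ.hm; omega⟩
instance : Fact (1 < 2 * γ.m) := ⟨by have := γ.hm; omega⟩
instance : Nonempty (ZMod (2 * γ.m)) := ⟨0⟩

lemma e_zero : e 0 = ((1, 0) : V) := rfl
lemma e_one : e 1 = ((0, 1) : V) := rfl

lemma fin2 (i : Fin 2) : i = 0 ∨ i = 1 := by
  fin_cases i
  · exact Or.inl rfl
  · exact Or.inr rfl

lemma eqE {q : E} {x : V} {i : Fin 2} (h1 : q.1 = x) (h2 : q.2 = i) : q = (x, i) := by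
  rw [← h1, ← h2]

lemma eqVV {q x : V} (h1 : q.1 = x.1) (h2 : q.2 = x.2) : q = x := by
  rcases q with ⟨q1, q2⟩; rcases x with ⟨x1, x2⟩; cases h1; cases h2; rfl

lemma eps_sub0 (v : V) : eps (v - (1, 0)) = -eps v := by
  unfold eps
  have h : (v - ((1, 0) : V)).1 + (v - ((1, 0) : V)).2 = v.1 + v.2 - 1 := by
    simp [Prod.fst_sub, Prod.snd_sub]; ring
  rw [h]
  by_cases hv : Even (v.1 + v.2)
  · rw [if_neg (by rw [Int.even_sub_one]; exact not_not_intro hv), if_pos hv]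
  · rw [if_pos (by rw [Int.even_sub_one]; exact hv), if_neg hv]
    norm_num

lemma eps_sub1 (v : V) : eps (v - (0, 1)) = -eps v := by
  unfold eps
  have h : (v - ((0, 1) : V)).1 + (v - ((0, 1) : V)).2 = v.1 + v.2 - 1 := by
    simp [Prod.fst_sub, Prod.snd_sub]; ring
  rw [h]
  by_cases hv : Even (v.1 + v.2)
  · rw [if_neg (by rw [Int.even_sub_one]; exact not_not_intro hv), if_pos hv]
  · rw [if_pos (by rw [Int.even_sub_one]; exact hv), if_neg hv]
    norm_num

lemma c_ne (j : ZMod (2 * γ.m)) : γ.c (j + 1) ≠ γ.c j := by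
  intro hjc
  have h1 : j + 1 = j := γ.inj hjc
  exact one_ne_zero (by rwa [add_eq_left] at h1)

lemma mem_ends_ed (j : ZMod (2 * γ.m)) {w : V}
    (hw : w = (γ.ed j).1 ∨ w = (γ.ed j).1 + e (γ.ed j).2) :
    w = γ.c j ∨ w = γ.c (j + 1) := by
  rcases γ.adj j with ⟨h1, h2⟩ | ⟨h1, h2⟩ <;> rcases hw with rfl | rfl
  · exact Or.inl h1
  · right; rw [h1]; exact h2
  · exact Or.inr h1
  · left; rw [h1]; exact h2

lemma ed_cases (j k : ZMod (2 * γ.m))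
    (hw : γ.c j = (γ.ed k).1 ∨ γ.c j = (γ.ed k).1 + e (γ.ed k).2) :
    k = j ∨ k + 1 = j := by
  rcases mem_ends_ed γ k hw with h | h
  · exact Or.inl (γ.inj h).symm
  · exact Or.inr (γ.inj h).symm

lemma alt' (j : ZMod (2 * γ.m)) : γ.ed (j - 1) ∈ M ↔ γ.ed j ∉ M := by
  have h := γ.alt (j - 1); rwa [sub_add_cancel] at h

lemma ed_succ_ne (j : ZMod (2 * γ.m)) : γ.ed j ≠ γ.ed (j + 1) := by
  intro hje
  have h := γ.alt j
  rw [hje] at h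
  exact iff_not_self h

lemma notS_at (j : ZMod (2 * γ.m)) (q : E)
    (hq : γ.c (j + 1) = q.1 ∨ γ.c (j + 1) = q.1 + e q.2)
    (h1 : q ≠ γ.ed j) (h2 : q ≠ γ.ed (j + 1)) : q ∉ Set.range γ.ed := by
  rintro ⟨k, rfl⟩
  rcases ed_cases γ (j + 1) k hq with h | h
  · exact h2 (by rw [h])
  · exact h1 (by rw [add_right_cancel h])

lemma notS_off (w : V) (hw : ∀ j, w ≠ γ.c j) (q : E)
    (hq : w = q.1 ∨ w = q.1 + e q.2) : q ∉ Set.range γ.ed := by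
  rintro ⟨k, rfl⟩
  rcases mem_ends_ed γ k hq with h | h
  · exact hw _ h
  · exact hw _ h

lemma ed_inj : Function.Injective γ.ed := by
  intro j k hjk
  have hcj : γ.c j = (γ.ed k).1 ∨ γ.c j = (γ.ed k).1 + e (γ.ed k).2 := by
    rw [← hjk]
    rcases γ.adj j with ⟨h1, h2⟩ | ⟨h1, h2⟩
    · exact Or.inl h1.symm
    · right; rw [h1]; exact h2.symm
  have hck : γ.c k = (γ.ed j).1 ∨ γ.c k = (γ.ed j).1 + e (γ.ed j).2 := by
    rw [hjk]
    rcases γ.adj k with ⟨h1, h2⟩ | ⟨h1, h2⟩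
    · exact Or.inl h1.symm
    · right; rw [h1]; exact h2.symm
  rcases ed_cases γ j k hcj with h | h
  · exact h.symm
  · rcases ed_cases γ k j hck with h' | h'
    · exact h'
    · exfalso
      apply ed_succ_ne γ k
      rw [h, hjk]

/-- the height-difference jump across the vertical edge `(v,1)` -/
noncomputable def Jv (v : V) : ℤ :=
  if ((v, (1 : Fin 2)) : E) ∈ Set.range γ.ed then
    (if ((v, (1 : Fin 2)) : E) ∈ M then -4 else 4) * eps v else 0

/-- the height-difference jump across the horizontal edge `(v,0)` -/
noncomputable def Kv (v : V) : ℤ :=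
  if ((v, (0 : Fin 2)) : E) ∈ Set.range γ.ed then
    (if ((v, (0 : Fin 2)) : E) ∈ M then 4 else -4) * eps v else 0

/-- the difference function: sum of jumps along the rightward ray -/
noncomputable def dfun (p : V) : ℤ :=
  ∑ j : ZMod (2 * γ.m),
    if (γ.ed j).2 = 1 ∧ (γ.ed j).1.2 = p.2 ∧ p.1 < (γ.ed j).1.1
    then (if γ.ed j ∈ M then -4 else 4) * eps (γ.ed j).1 else 0

lemma sum_ite_range {α : Type*} [Fintype α] {g : α → E} (hg : Function.Injective g)
    (q : E) (f : E → ℤ) :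
    (∑ j : α, if g j = q then f (g j) else 0) = if q ∈ Set.range g then f q else 0 := by
  by_cases hq : q ∈ Set.range g
  · obtain ⟨j₀, rfl⟩ := hq
    rw [if_pos ⟨j₀, rfl⟩]
    rw [Finset.sum_eq_single j₀]
    · rw [if_pos rfl]
    · intro b _ hb
      exact if_neg (fun hbq => hb (hg hbq))
    · intro hj; exact absurd (Finset.mem_univ j₀) hj
  · rw [if_neg hq, Finset.sum_eq_zero]
    intro j _
    exact if_neg (fun hj => hq ⟨j, hj⟩)

lemma dfun_sub_e0 (v : V) : dfun γ (v - (1, 0)) = dfun γ v + Jv γ v := by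
  have key : ∀ j : ZMod (2 * γ.m),
      (if (γ.ed j).2 = 1 ∧ (γ.ed j).1.2 = (v - ((1, 0) : V)).2 ∧ (v - ((1, 0) : V)).1 < (γ.ed j).1.1
        then (if γ.ed j ∈ M then -4 else 4) * eps (γ.ed j).1 else 0)
      = (if (γ.ed j).2 = 1 ∧ (γ.ed j).1.2 = v.2 ∧ v.1 < (γ.ed j).1.1
        then (if γ.ed j ∈ M then -4 else 4) * eps (γ.ed j).1 else 0)
        + (if γ.ed j = ((v, (1 : Fin 2)) : E)
            then (if γ.ed j ∈ M then (-4 : ℤ) else 4) * eps (γ.ed j).1 else 0) := by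
    intro j
    have h1 : (v - ((1, 0) : V)).1 = v.1 - 1 := by simp
    have h2 : (v - ((1, 0) : V)).2 = v.2 := by simp
    rw [h1, h2]
    by_cases hq : γ.ed j = ((v, (1 : Fin 2)) : E)
    · have c1 : (γ.ed j).2 = 1 ∧ (γ.ed j).1.2 = v.2 ∧ v.1 - 1 < (γ.ed j).1.1 := by
        rw [hq]; exact ⟨rfl, rfl, show v.1 - 1 < v.1 by omega⟩
      have c2 : ¬((γ.ed j).2 = 1 ∧ (γ.ed j).1.2 = v.2 ∧ v.1 < (γ.ed j).1.1) := by
        rw [hq]; rintro ⟨-, -, hcc⟩; exact absurd (show v.1 < v.1 from hcc) (lt_irrefl _)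
      rw [if_pos c1, if_neg c2, if_pos hq, zero_add]
    · rw [if_neg hq, add_zero]
      apply if_congr _ rfl rfl
      constructor
      · rintro ⟨ha, hb, hc⟩
        refine ⟨ha, hb, ?_⟩
        by_contra hlt
        apply hq
        have hx : (γ.ed j).1.1 = v.1 := by omega
        exact eqE (eqVV hx hb) ha
      · rintro ⟨ha, hb, hc⟩
        exact ⟨ha, hb, by omega⟩
  rw [dfun, dfun]
  rw [Finset.sum_congr rfl (fun j _ => key j), Finset.sum_add_distrib]
  congr 1
  have := sum_ite_range (ed_inj γ) ((v, (1 : Fin 2)) : E)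
    (fun q => (if q ∈ M then (-4 : ℤ) else 4) * eps q.1)
  rw [this]
  rfl

lemma four_core (M' : Set E) (a b c d x y : E)
    (hab : a ≠ b) (hac : a ≠ c) (had : a ≠ d) (hbc : b ≠ c) (hbd : b ≠ d) (hcd : c ≠ d)
    (hxy : x ≠ y)
    (hmx : x = a ∨ x = b ∨ x = c ∨ x = d) (hmy : y = a ∨ y = b ∨ y = c ∨ y = d)
    (halt : (x ∈ M' ∧ y ∉ M') ∨ (x ∉ M' ∧ y ∈ M')) :
    ((if a = x ∨ a = y then (if a ∈ M' then (4 : ℤ) else -4) else 0) +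
     (if b = x ∨ b = y then (if b ∈ M' then (4 : ℤ) else -4) else 0)) +
    ((if c = x ∨ c = y then (if c ∈ M' then (4 : ℤ) else -4) else 0) +
     (if d = x ∨ d = y then (if d ∈ M' then (4 : ℤ) else -4) else 0)) = 0 := by
  have hba := hab.symm; have hca := hac.symm; have hda := had.symm
  have hcb := hbc.symm; have hdb := hbd.symm; have hdc := hcd.symm
  rcases hmx with rfl | rfl | rfl | rfl <;> rcases hmy with rfl | rfl | rfl | rfl <;>
    rcases halt with ⟨h1, h2⟩ | ⟨h1, h2⟩ <;>
    simp_all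

lemma closed (w : V) :
    Kv γ w + Jv γ (w - (0, 1)) = Jv γ w + Kv γ (w - (1, 0)) := by
  have hwc : w ≠ w - ((1 : ℤ), (0 : ℤ)) := by
    intro hh
    have h1 : w.1 = (w - ((1, 0) : V)).1 := congrArg Prod.fst hh
    simp [Prod.fst_sub] at h1
    omega
  have hwb : w ≠ w - ((0 : ℤ), (1 : ℤ)) := by
    intro hh
    have h1 : w.2 = (w - ((0, 1) : V)).2 := congrArg Prod.snd hh
    simp [Prod.snd_sub] at h1
    omega
  -- the four edges around w
  have hd01 : ((1 : Fin 2)) ≠ 0 := by decide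
  have hab : ((w, (0 : Fin 2)) : E) ≠ (w - (0, 1), (1 : Fin 2)) := by
    intro hh; exact hd01 (congrArg Prod.snd hh).symm
  have hac : ((w, (0 : Fin 2)) : E) ≠ (w - (1, 0), (0 : Fin 2)) := by
    intro hh; exact hwc (congrArg Prod.fst hh)
  have had : ((w, (0 : Fin 2)) : E) ≠ (w, (1 : Fin 2)) := by
    intro hh; exact hd01 (congrArg Prod.snd hh).symm
  have hbc : ((w - (0, 1), (1 : Fin 2)) : E) ≠ (w - (1, 0), (0 : Fin 2)) := by
    intro hh; exact hd01 (congrArg Prod.snd hh)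
  have hbd : ((w - (0, 1), (1 : Fin 2)) : E) ≠ (w, (1 : Fin 2)) := by
    intro hh; exact hwb (congrArg Prod.fst hh).symm
  have hcd : ((w - (1, 0), (0 : Fin 2)) : E) ≠ (w, (1 : Fin 2)) := by
    intro hh; exact hd01 (congrArg Prod.snd hh).symm
  -- incidences of the four edges to w
  have hinc_a : w = ((w, (0 : Fin 2)) : E).1 ∨
      w = ((w, (0 : Fin 2)) : E).1 + e ((w, (0 : Fin 2)) : E).2 := Or.inl rfl
  have hinc_b : w = ((w - (0, 1), (1 : Fin 2)) : E).1 ∨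
      w = ((w - (0, 1), (1 : Fin 2)) : E).1 + e ((w - (0, 1), (1 : Fin 2)) : E).2 := by
    right; rw [e_one, sub_add_cancel]
  have hinc_c : w = ((w - (1, 0), (0 : Fin 2)) : E).1 ∨
      w = ((w - (1, 0), (0 : Fin 2)) : E).1 + e ((w - (1, 0), (0 : Fin 2)) : E).2 := by
    right; rw [e_zero, sub_add_cancel]
  have hinc_d : w = ((w, (1 : Fin 2)) : E).1 ∨
      w = ((w, (1 : Fin 2)) : E).1 + e ((w, (1 : Fin 2)) : E).2 := Or.inl rfl
  -- rewrite the four quantities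
  have hKw : Kv γ w =
      (if ((w, (0 : Fin 2)) : E) ∈ Set.range γ.ed then
        (if ((w, (0 : Fin 2)) : E) ∈ M then (4 : ℤ) else -4) else 0) * eps w := by
    rw [Kv]; split_ifs <;> ring
  have hJb : Jv γ (w - (0, 1)) =
      (if ((w - (0, 1), (1 : Fin 2)) : E) ∈ Set.range γ.ed then
        (if ((w - (0, 1), (1 : Fin 2)) : E) ∈ M then (4 : ℤ) else -4) else 0) * eps w := by
    rw [Jv, eps_sub1]; split_ifs <;> ring
  have hJw : Jv γ w =
      (-(if ((w, (1 : Fin 2)) : E) ∈ Set.range γ.ed then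
        (if ((w, (1 : Fin 2)) : E) ∈ M then (4 : ℤ) else -4) else 0)) * eps w := by
    rw [Jv]; split_ifs <;> ring
  have hKc : Kv γ (w - (1, 0)) =
      (-(if ((w - (1, 0), (0 : Fin 2)) : E) ∈ Set.range γ.ed then
        (if ((w - (1, 0), (0 : Fin 2)) : E) ∈ M then (4 : ℤ) else -4) else 0)) * eps w := by
    rw [Kv, eps_sub0]; split_ifs <;> ring
  rw [hKw, hJb, hJw, hKc]
  by_cases hcyc : ∃ j, w = γ.c j
  · obtain ⟨j, hj⟩ := hcyc
    set i := j - 1 with hi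
    have hji : i + 1 = j := sub_add_cancel j 1
    have hwv : w = γ.c (i + 1) := by rw [hji, ← hj]
    -- the two cycle edges at w
    have hxS : γ.ed i ∈ Set.range γ.ed := ⟨i, rfl⟩
    have hyS : γ.ed (i + 1) ∈ Set.range γ.ed := ⟨i + 1, rfl⟩
    have hxy : γ.ed i ≠ γ.ed (i + 1) := ed_succ_ne γ i
    have halt : (γ.ed i ∈ M ∧ γ.ed (i + 1) ∉ M) ∨ (γ.ed i ∉ M ∧ γ.ed (i + 1) ∈ M) := by
      rcases Classical.em (γ.ed i ∈ M) with h | h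
      · exact Or.inl ⟨h, (γ.alt i).mp h⟩
      · refine Or.inr ⟨h, ?_⟩
        by_contra h2
        exact h ((γ.alt i).mpr h2)
    -- incidence of the two cycle edges to w
    have hxinc : w = (γ.ed i).1 ∨ w = (γ.ed i).1 + e (γ.ed i).2 := by
      rcases γ.adj i with ⟨h1, h2⟩ | ⟨h1, h2⟩
      · right; rw [h1, h2]; exact hwv
      · left; rw [h1]; exact hwv
    have hyinc : w = (γ.ed (i + 1)).1 ∨ w = (γ.ed (i + 1)).1 + e (γ.ed (i + 1)).2 := by
      rcases γ.adj (i + 1) with ⟨h1, h2⟩ | ⟨h1, h2⟩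
      · left; rw [h1]; exact hwv
      · right; rw [h1, h2]; exact hwv
    -- each incident edge is one of the four candidates
    have incident_four : ∀ q : E, (w = q.1 ∨ w = q.1 + e q.2) →
        q = ((w, (0 : Fin 2)) : E) ∨ q = (w - (0, 1), (1 : Fin 2)) ∨
        q = (w - (1, 0), (0 : Fin 2)) ∨ q = (w, (1 : Fin 2)) := by
      rintro ⟨u, du⟩ hq
      rcases fin2 du with rfl | rfl
      · rw [e_zero] at hq
        rcases hq with hq | hq
        · left; rw [hq]
        · right; right; left
          have : u = w - (1, 0) := by rw [hq]; ring
          rw [this]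
      · rw [e_one] at hq
        rcases hq with hq | hq
        · right; right; right; rw [hq]
        · right; left
          have : u = w - (0, 1) := by rw [hq]; ring
          rw [this]
    have hmx := incident_four (γ.ed i) hxinc
    have hmy := incident_four (γ.ed (i + 1)) hyinc
    -- characterization of membership for the four candidates
    have hchar : ∀ q : E, (w = q.1 ∨ w = q.1 + e q.2) →
        (q ∈ Set.range γ.ed) = (q = γ.ed i ∨ q = γ.ed (i + 1)) := by
      intro q hq
      apply propext
      constructor
      · intro hqS
        by_contra hcon
        push_neg at hcon
        exact notS_at γ i q (by rw [← hwv]; exact hq) hcon.1 hcon.2 hqS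
      · rintro (rfl | rfl)
        · exact hxS
        · exact hyS
    have h0 := four_core M ((w, (0 : Fin 2)) : E) ((w - (0, 1), (1 : Fin 2)) : E)
      ((w - (1, 0), (0 : Fin 2)) : E) ((w, (1 : Fin 2)) : E)
      (γ.ed i) (γ.ed (i + 1)) hab hac had hbc hbd hcd hxy hmx hmy halt
    simp only [hchar _ hinc_a, hchar _ hinc_b, hchar _ hinc_c, hchar _ hinc_d]
    linear_combination eps w * h0
  · push_neg at hcyc
    rw [if_neg (notS_off γ w hcyc _ hinc_a), if_neg (notS_off γ w hcyc _ hinc_b),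
      if_neg (notS_off γ w hcyc _ hinc_c), if_neg (notS_off γ w hcyc _ hinc_d)]
    ring

/-- max of the `x`-coordinates of edge basepoints -/
noncomputable def hiX : ℤ :=
  (Finset.univ.image fun j => (γ.ed j).1.1).max' (Finset.image_nonempty.mpr Finset.univ_nonempty)

noncomputable def loX : ℤ :=
  (Finset.univ.image fun j => (γ.ed j).1.1).min' (Finset.image_nonempty.mpr Finset.univ_nonempty)

noncomputable def hiY : ℤ :=
  (Finset.univ.image fun j => (γ.ed j).1.2).max' (Finset.image_nonempty.mpr Finset.univ_nonempty)

noncomputable def loY : ℤ :=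
  (Finset.univ.image fun j => (γ.ed j).1.2).min' (Finset.image_nonempty.mpr Finset.univ_nonempty)

lemma le_hiX (j : ZMod (2 * γ.m)) : (γ.ed j).1.1 ≤ hiX γ := by
  unfold hiX
  exact Finset.le_max' (Finset.univ.image fun k => (γ.ed k).1.1) _
    (Finset.mem_image_of_mem _ (Finset.mem_univ j))

lemma loX_le (j : ZMod (2 * γ.m)) : loX γ ≤ (γ.ed j).1.1 := by
  unfold loX
  exact Finset.min'_le _ _ (Finset.mem_image_of_mem _ (Finset.mem_univ j))

lemma le_hiY (j : ZMod (2 * γ.m)) : (γ.ed j).1.2 ≤ hiY γ := by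
  unfold hiY
  exact Finset.le_max' (Finset.univ.image fun k => (γ.ed k).1.2) _
    (Finset.mem_image_of_mem _ (Finset.mem_univ j))

lemma loY_le (j : ZMod (2 * γ.m)) : loY γ ≤ (γ.ed j).1.2 := by
  unfold loY
  exact Finset.min'_le _ _ (Finset.mem_image_of_mem _ (Finset.mem_univ j))

lemma dfun_right (p : V) (hp : ∀ j, (γ.ed j).1.1 ≤ p.1) : dfun γ p = 0 := by
  apply Finset.sum_eq_zero
  intro j _
  rw [if_neg]
  rintro ⟨-, -, hc⟩
  exact absurd hc (not_lt.mpr (hp j))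

lemma Kv_far (p : V) (hp : ∀ j, (γ.ed j).1.1 < p.1) : Kv γ p = 0 := by
  rw [Kv, if_neg]
  rintro ⟨j, hj⟩
  have h := hp j
  rw [hj] at h
  exact absurd (show p.1 < p.1 from h) (lt_irrefl _)

lemma dfun_sub_e1 (v : V) : dfun γ (v - (0, 1)) = dfun γ v + Kv γ v := by
  have key : ∀ p : V, dfun γ (p - (0, 1)) - dfun γ p - Kv γ p
      = dfun γ ((p + (1, 0)) - (0, 1)) - dfun γ (p + (1, 0)) - Kv γ (p + (1, 0)) := by
    intro p
    have h1 := dfun_sub_e0 γ (M := M) ((p + (1, 0)) - (0, 1))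
    rw [show (p + ((1, 0) : V)) - (0, 1) - (1, 0) = p - (0, 1) from by apply eqVV <;> simp <;> omega] at h1
    have h2 := dfun_sub_e0 γ (M := M) (p + (1, 0))
    rw [show (p + ((1, 0) : V)) - (1, 0) = p from by apply eqVV <;> simp <;> omega] at h2
    have h3 := closed γ (p + (1, 0))
    rw [show (p + ((1, 0) : V)) - (1, 0) = p from by apply eqVV <;> simp <;> omega] at h3
    linarith
  have iter : ∀ (t : ℕ) (p : V), dfun γ (p - (0, 1)) - dfun γ p - Kv γ p
      = dfun γ ((p + ((t : ℤ), 0)) - (0, 1)) - dfun γ (p + ((t : ℤ), 0))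
        - Kv γ (p + ((t : ℤ), 0)) := by
    intro t
    induction t with
    | zero =>
      intro p
      rw [show p + (((0 : ℕ) : ℤ), 0) = p from by apply eqVV <;> simp]
    | succ n ih =>
      intro p
      rw [key p, ih (p + (1, 0)),
        show p + ((1, 0) : V) + (((n : ℕ) : ℤ), 0) = p + ((((n : ℕ) + 1 : ℕ) : ℤ), 0) from by
          apply eqVV <;> simp <;> omega]
  set t := (hiX γ + 1 - v.1).toNat with ht
  have ht' : hiX γ + 1 - v.1 ≤ (t : ℤ) := Int.self_le_toNat _
  have hfst : ((v + (((t : ℕ) : ℤ), 0)) : V).1 = v.1 + t := by simp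
  have hfst2 : (((v + (((t : ℕ) : ℤ), 0)) : V) - (0, 1)).1 = v.1 + t := by simp
  have hbig : ∀ j, (γ.ed j).1.1 < v.1 + t := by
    intro j
    have := le_hiX γ j
    omega
  have z1 : dfun γ ((v + (((t : ℕ) : ℤ), 0)) - (0, 1)) = 0 := by
    apply dfun_right γ
    intro j
    rw [hfst2]
    exact le_of_lt (hbig j)
  have z2 : dfun γ (v + (((t : ℕ) : ℤ), 0)) = 0 := by
    apply dfun_right γ
    intro j
    rw [hfst]
    exact le_of_lt (hbig j)
  have z3 : Kv γ (v + (((t : ℕ) : ℤ), 0)) = 0 := by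
    apply Kv_far γ
    intro j
    rw [hfst]
    exact hbig j
  have h := iter t v
  rw [z1, z2, z3] at h
  linarith

lemma djump_v (v : V) (hv : ((v, (1 : Fin 2)) : E) ∉ Set.range γ.ed) :
    dfun γ (v - (1, 0)) = dfun γ v := by
  rw [dfun_sub_e0, Jv, if_neg hv, add_zero]

lemma djump_h (v : V) (hv : ((v, (0 : Fin 2)) : E) ∉ Set.range γ.ed) :
    dfun γ (v - (0, 1)) = dfun γ v := by
  rw [dfun_sub_e1, Kv, if_neg hv, add_zero]

/-- The plaquette to the left of the edge `ed j`, w.r.t. the traversal direction. -/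
noncomputable def Lp (j : ZMod (2 * γ.m)) : V :=
  if (γ.ed j).1 = γ.c j then
    (if (γ.ed j).2 = 0 then (γ.ed j).1 else (γ.ed j).1 - (1, 0))
  else
    (if (γ.ed j).2 = 0 then (γ.ed j).1 - (0, 1) else (γ.ed j).1)

/-- The plaquette to the right of the edge `ed j`, w.r.t. the traversal direction. -/
noncomputable def Rp (j : ZMod (2 * γ.m)) : V :=
  if (γ.ed j).1 = γ.c j then
    (if (γ.ed j).2 = 0 then (γ.ed j).1 - (0, 1) else (γ.ed j).1)
  else
    (if (γ.ed j).2 = 0 then (γ.ed j).1 else (γ.ed j).1 - (1, 0))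

lemma step_LR (j : ZMod (2 * γ.m)) :
    dfun γ (Lp γ j) = dfun γ (Lp γ (j + 1)) ∧ dfun γ (Rp γ j) = dfun γ (Rp γ (j + 1)) := by
  set w := γ.c (j + 1) with hw
  have hd01 : ((1 : Fin 2)) ≠ 0 := by decide
  -- pairwise distinctness of the four candidate edges at w
  have n_ab : ((w, (0 : Fin 2)) : E) ≠ (w - (0, 1), (1 : Fin 2)) := by
    intro hh; exact hd01 (congrArg Prod.snd hh).symm
  have n_ac : ((w, (0 : Fin 2)) : E) ≠ (w - (1, 0), (0 : Fin 2)) := by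
    intro hh
    have h1 := congrArg (fun q : E => q.1.1) hh
    simp at h1
    omega
  have n_ad : ((w, (0 : Fin 2)) : E) ≠ (w, (1 : Fin 2)) := by
    intro hh; exact hd01 (congrArg Prod.snd hh).symm
  have n_bc : ((w - (0, 1), (1 : Fin 2)) : E) ≠ (w - (1, 0), (0 : Fin 2)) := by
    intro hh; exact hd01 (congrArg Prod.snd hh)
  have n_bd : ((w - (0, 1), (1 : Fin 2)) : E) ≠ (w, (1 : Fin 2)) := by
    intro hh
    have h1 := congrArg (fun q : E => q.1.2) hh
    simp at h1
  have n_cd : ((w - (1, 0), (0 : Fin 2)) : E) ≠ (w, (1 : Fin 2)) := by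
    intro hh; exact hd01 (congrArg Prod.snd hh).symm
  -- incidences to w
  have inc_a : γ.c (j + 1) = ((w, (0 : Fin 2)) : E).1 ∨
      γ.c (j + 1) = ((w, (0 : Fin 2)) : E).1 + e ((w, (0 : Fin 2)) : E).2 := Or.inl hw.symm
  have inc_b : γ.c (j + 1) = ((w - (0, 1), (1 : Fin 2)) : E).1 ∨
      γ.c (j + 1) = ((w - (0, 1), (1 : Fin 2)) : E).1 + e ((w - (0, 1), (1 : Fin 2)) : E).2 := by
    right; show γ.c (j + 1) = w - (0, 1) + e 1
    rw [e_one, sub_add_cancel]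
  have inc_c : γ.c (j + 1) = ((w - (1, 0), (0 : Fin 2)) : E).1 ∨
      γ.c (j + 1) = ((w - (1, 0), (0 : Fin 2)) : E).1 + e ((w - (1, 0), (0 : Fin 2)) : E).2 := by
    right; show γ.c (j + 1) = w - (1, 0) + e 0
    rw [e_zero, sub_add_cancel]
  have inc_d : γ.c (j + 1) = ((w, (1 : Fin 2)) : E).1 ∨
      γ.c (j + 1) = ((w, (1 : Fin 2)) : E).1 + e ((w, (1 : Fin 2)) : E).2 := Or.inl hw.symm
  -- the basic zero-jump moves around w
  have hSW : w - ((0, 1) : V) - (1, 0) = w - (1, 0) - (0, 1) := by apply eqVV <;> simp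
  have mv : ((w, (1 : Fin 2)) : E) ∉ Set.range γ.ed →
      dfun γ (w - (1, 0)) = dfun γ w := djump_v γ w
  have mh : ((w, (0 : Fin 2)) : E) ∉ Set.range γ.ed →
      dfun γ (w - (0, 1)) = dfun γ w := djump_h γ w
  have mvb : ((w - (0, 1), (1 : Fin 2)) : E) ∉ Set.range γ.ed →
      dfun γ (w - (1, 0) - (0, 1)) = dfun γ (w - (0, 1)) := by
    intro hq
    have := djump_v γ (w - (0, 1)) hq
    rwa [hSW] at this
  have mhc : ((w - (1, 0), (0 : Fin 2)) : E) ∉ Set.range γ.ed →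
      dfun γ (w - (1, 0) - (0, 1)) = dfun γ (w - (1, 0)) := djump_h γ (w - (1, 0))
  -- case analysis for the incoming edge
  have hin : (γ.ed j = ((w - (1, 0), (0 : Fin 2)) : E) ∧ Lp γ j = w - (1, 0) ∧
        Rp γ j = w - (1, 0) - (0, 1))
      ∨ (γ.ed j = ((w - (0, 1), (1 : Fin 2)) : E) ∧ Lp γ j = w - (1, 0) - (0, 1) ∧
        Rp γ j = w - (0, 1))
      ∨ (γ.ed j = ((w, (0 : Fin 2)) : E) ∧ Lp γ j = w - (0, 1) ∧ Rp γ j = w)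
      ∨ (γ.ed j = ((w, (1 : Fin 2)) : E) ∧ Lp γ j = w ∧ Rp γ j = w - (1, 0)) := by
    rcases γ.adj j with ⟨h1, h2⟩ | ⟨h1, h2⟩ <;> rcases fin2 (γ.ed j).2 with hdd | hdd
    · -- positively traversed, horizontal
      rw [hdd, e_zero, ← hw] at h2
      have hbase : (γ.ed j).1 = w - (1, 0) := by
        rw [h1, ← h2]; apply eqVV <;> simp
      refine Or.inl ⟨eqE hbase hdd, ?_, ?_⟩
      · rw [Lp, if_pos h1, if_pos hdd, hbase]
      · rw [Rp, if_pos h1, if_pos hdd, hbase]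
    · -- positively traversed, vertical
      rw [hdd, e_one, ← hw] at h2
      have hbase : (γ.ed j).1 = w - (0, 1) := by
        rw [h1, ← h2]; apply eqVV <;> simp
      have hne0 : ¬((γ.ed j).2 = 0) := by rw [hdd]; decide
      refine Or.inr (Or.inl ⟨eqE hbase hdd, ?_, ?_⟩)
      · rw [Lp, if_pos h1, if_neg hne0, hbase, hSW]
      · rw [Rp, if_pos h1, if_neg hne0, hbase]
    · -- negatively traversed, horizontal
      rw [← hw] at h1
      have hne : ¬((γ.ed j).1 = γ.c j) := by
        rw [h1, hw]; exact c_ne γ j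
      refine Or.inr (Or.inr (Or.inl ⟨eqE h1 hdd, ?_, ?_⟩))
      · rw [Lp, if_neg hne, if_pos hdd, h1]
      · rw [Rp, if_neg hne, if_pos hdd, h1]
    · -- negatively traversed, vertical
      rw [← hw] at h1
      have hne : ¬((γ.ed j).1 = γ.c j) := by
        rw [h1, hw]; exact c_ne γ j
      have hne0 : ¬((γ.ed j).2 = 0) := by rw [hdd]; decide
      refine Or.inr (Or.inr (Or.inr ⟨eqE h1 hdd, ?_, ?_⟩))
      · rw [Lp, if_neg hne, if_neg hne0, h1]
      · rw [Rp, if_neg hne, if_neg hne0, h1]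
  -- case analysis for the outgoing edge
  have hout : (γ.ed (j + 1) = ((w, (0 : Fin 2)) : E) ∧ Lp γ (j + 1) = w ∧
        Rp γ (j + 1) = w - (0, 1))
      ∨ (γ.ed (j + 1) = ((w, (1 : Fin 2)) : E) ∧ Lp γ (j + 1) = w - (1, 0) ∧
        Rp γ (j + 1) = w)
      ∨ (γ.ed (j + 1) = ((w - (1, 0), (0 : Fin 2)) : E) ∧
        Lp γ (j + 1) = w - (1, 0) - (0, 1) ∧ Rp γ (j + 1) = w - (1, 0))
      ∨ (γ.ed (j + 1) = ((w - (0, 1), (1 : Fin 2)) : E) ∧ Lp γ (j + 1) = w - (0, 1) ∧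
        Rp γ (j + 1) = w - (1, 0) - (0, 1)) := by
    rcases γ.adj (j + 1) with ⟨h1, h2⟩ | ⟨h1, h2⟩ <;> rcases fin2 (γ.ed (j + 1)).2 with hdd | hdd
    · -- positively traversed, horizontal
      rw [← hw] at h1
      refine Or.inl ⟨eqE h1 hdd, ?_, ?_⟩
      · rw [Lp, if_pos (h1.trans hw), if_pos hdd, h1]
      · rw [Rp, if_pos (h1.trans hw), if_pos hdd, h1]
    · -- positively traversed, vertical
      rw [← hw] at h1
      have hne0 : ¬((γ.ed (j + 1)).2 = 0) := by rw [hdd]; decide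
      refine Or.inr (Or.inl ⟨eqE h1 hdd, ?_, ?_⟩)
      · rw [Lp, if_pos (h1.trans hw), if_neg hne0, h1]
      · rw [Rp, if_pos (h1.trans hw), if_neg hne0, h1]
    · -- negatively traversed, horizontal
      rw [hdd, e_zero, ← hw] at h2
      have hbase : (γ.ed (j + 1)).1 = w - (1, 0) := by
        rw [h1, ← h2]; apply eqVV <;> simp
      have hne : ¬((γ.ed (j + 1)).1 = γ.c (j + 1)) := by
        rw [h1]; exact c_ne γ (j + 1)
      refine Or.inr (Or.inr (Or.inl ⟨eqE hbase hdd, ?_, ?_⟩))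
      · rw [Lp, if_neg hne, if_pos hdd, hbase]
      · rw [Rp, if_neg hne, if_pos hdd, hbase]
    · -- negatively traversed, vertical
      rw [hdd, e_one, ← hw] at h2
      have hbase : (γ.ed (j + 1)).1 = w - (0, 1) := by
        rw [h1, ← h2]; apply eqVV <;> simp
      have hne : ¬((γ.ed (j + 1)).1 = γ.c (j + 1)) := by
        rw [h1]; exact c_ne γ (j + 1)
      have hne0 : ¬((γ.ed (j + 1)).2 = 0) := by rw [hdd]; decide
      refine Or.inr (Or.inr (Or.inr ⟨eqE hbase hdd, ?_, ?_⟩))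
      · rw [Lp, if_neg hne, if_neg hne0, hbase]
      · rw [Rp, if_neg hne, if_neg hne0, hbase, hSW]
  clear hw
  rcases hin with ⟨he, hL, hR⟩ | ⟨he, hL, hR⟩ | ⟨he, hL, hR⟩ | ⟨he, hL, hR⟩ <;>
    rcases hout with ⟨he', hL', hR'⟩ | ⟨he', hL', hR'⟩ | ⟨he', hL', hR'⟩ | ⟨he', hL', hR'⟩ <;>
    rw [hL, hL', hR, hR']
  -- (A,A')
  · constructor
    · exact mv (notS_at γ j _ inc_d (by rw [he]; first | exact n_cd | exact n_cd.symm) (by rw [he']; first | exact n_ad | exact n_ad.symm))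
    · rw [← hSW]
      exact djump_v γ (w - (0, 1)) (notS_at γ j _ inc_b
        (by rw [he]; first | exact n_bc | exact n_bc.symm) (by rw [he']; first | exact n_ab | exact n_ab.symm))
  -- (A,B')
  · constructor
    · rfl
    · have hb := notS_at γ j _ inc_b (by rw [he]; first | exact n_bc | exact n_bc.symm) (by rw [he']; first | exact n_bd | exact n_bd.symm)
      have ha := notS_at γ j _ inc_a (by rw [he]; first | exact n_ac | exact n_ac.symm) (by rw [he']; first | exact n_ad | exact n_ad.symm)
      exact (mvb hb).trans (mh ha)
  -- (A,C') impossible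
  · exact (ed_succ_ne γ j (he.trans he'.symm)).elim
  -- (A,D')
  · constructor
    · have hd := notS_at γ j _ inc_d (by rw [he]; first | exact n_cd | exact n_cd.symm) (by rw [he']; first | exact n_bd | exact n_bd.symm)
      have ha := notS_at γ j _ inc_a (by rw [he]; first | exact n_ac | exact n_ac.symm) (by rw [he']; first | exact n_ab | exact n_ab.symm)
      exact (mv hd).trans (mh ha).symm
    · rfl
  -- (B,A')
  · constructor
    · have hc := notS_at γ j _ inc_c (by rw [he]; first | exact n_bc | exact n_bc.symm) (by rw [he']; first | exact n_ac | exact n_ac.symm)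
      have hd := notS_at γ j _ inc_d (by rw [he]; first | exact n_bd | exact n_bd.symm) (by rw [he']; first | exact n_ad | exact n_ad.symm)
      exact (mhc hc).trans (mv hd)
    · rfl
  -- (B,B')
  · constructor
    · exact mhc (notS_at γ j _ inc_c (by rw [he]; first | exact n_bc | exact n_bc.symm) (by rw [he']; first | exact n_cd | exact n_cd.symm))
    · exact mh (notS_at γ j _ inc_a (by rw [he]; first | exact n_ab | exact n_ab.symm) (by rw [he']; first | exact n_ad | exact n_ad.symm))
  -- (B,C')
  · constructor
    · rfl
    · have ha := notS_at γ j _ inc_a (by rw [he]; first | exact n_ab | exact n_ab.symm) (by rw [he']; first | exact n_ac | exact n_ac.symm)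
      have hd := notS_at γ j _ inc_d (by rw [he]; first | exact n_bd | exact n_bd.symm) (by rw [he']; first | exact n_cd | exact n_cd.symm)
      exact (mh ha).trans (mv hd).symm
  -- (B,D') impossible
  · exact (ed_succ_ne γ j (he.trans he'.symm)).elim
  -- (C,A') impossible
  · exact (ed_succ_ne γ j (he.trans he'.symm)).elim
  -- (C,B')
  · constructor
    · have hb := notS_at γ j _ inc_b (by rw [he]; first | exact n_ab | exact n_ab.symm) (by rw [he']; first | exact n_bd | exact n_bd.symm)
      have hc := notS_at γ j _ inc_c (by rw [he]; first | exact n_ac | exact n_ac.symm) (by rw [he']; first | exact n_cd | exact n_cd.symm)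
      exact (mvb hb).symm.trans (mhc hc)
    · rfl
  -- (C,C')
  · constructor
    · have hb := notS_at γ j _ inc_b (by rw [he]; first | exact n_ab | exact n_ab.symm) (by rw [he']; first | exact n_bc | exact n_bc.symm)
      exact (mvb hb).symm
    · have hd := notS_at γ j _ inc_d (by rw [he]; first | exact n_ad | exact n_ad.symm) (by rw [he']; first | exact n_cd | exact n_cd.symm)
      exact (mv hd).symm
  -- (C,D')
  · constructor
    · rfl
    · have hd := notS_at γ j _ inc_d (by rw [he]; first | exact n_ad | exact n_ad.symm) (by rw [he']; first | exact n_bd | exact n_bd.symm)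
      have hc := notS_at γ j _ inc_c (by rw [he]; first | exact n_ac | exact n_ac.symm) (by rw [he']; first | exact n_bc | exact n_bc.symm)
      exact (mv hd).symm.trans (mhc hc).symm
  -- (D,A')
  · constructor
    · rfl
    · have hc := notS_at γ j _ inc_c (by rw [he]; first | exact n_cd | exact n_cd.symm) (by rw [he']; first | exact n_ac | exact n_ac.symm)
      have hb := notS_at γ j _ inc_b (by rw [he]; first | exact n_bd | exact n_bd.symm) (by rw [he']; first | exact n_ab | exact n_ab.symm)
      exact (mhc hc).symm.trans (mvb hb)
  -- (D,B') impossible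
  · exact (ed_succ_ne γ j (he.trans he'.symm)).elim
  -- (D,C')
  · constructor
    · have ha := notS_at γ j _ inc_a (by rw [he]; first | exact n_ad | exact n_ad.symm) (by rw [he']; first | exact n_ac | exact n_ac.symm)
      have hb := notS_at γ j _ inc_b (by rw [he]; first | exact n_bd | exact n_bd.symm) (by rw [he']; first | exact n_bc | exact n_bc.symm)
      exact (mh ha).symm.trans (mvb hb).symm
    · rfl
  -- (D,D')
  · constructor
    · have ha := notS_at γ j _ inc_a (by rw [he]; first | exact n_ad | exact n_ad.symm) (by rw [he']; first | exact n_ab | exact n_ab.symm)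
      exact (mh ha).symm
    · have hc := notS_at γ j _ inc_c (by rw [he]; first | exact n_cd | exact n_cd.symm) (by rw [he']; first | exact n_bc | exact n_bc.symm)
      exact (mhc hc).symm

lemma dL_const (j k : ZMod (2 * γ.m)) : dfun γ (Lp γ j) = dfun γ (Lp γ k) := by
  have hiter : ∀ (t : ℕ) (i : ZMod (2 * γ.m)),
      dfun γ (Lp γ i) = dfun γ (Lp γ (i + (t : ZMod (2 * γ.m)))) := by
    intro t
    induction t with
    | zero => intro i; simp
    | succ n ih =>
      intro i
      rw [(step_LR γ i).1, ih (i + 1),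
        show i + 1 + ((n : ℕ) : ZMod (2 * γ.m)) = i + (((n + 1 : ℕ)) : ZMod (2 * γ.m)) from by
          push_cast; ring]
  have h := hiter (k - j).val j
  rwa [show (((k - j).val : ℕ) : ZMod (2 * γ.m)) = k - j from ZMod.natCast_rightInverse (k - j),
    add_comm, sub_add_cancel] at h

lemma dR_const (j k : ZMod (2 * γ.m)) : dfun γ (Rp γ j) = dfun γ (Rp γ k) := by
  have hiter : ∀ (t : ℕ) (i : ZMod (2 * γ.m)),
      dfun γ (Rp γ i) = dfun γ (Rp γ (i + (t : ZMod (2 * γ.m)))) := by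
    intro t
    induction t with
    | zero => intro i; simp
    | succ n ih =>
      intro i
      rw [(step_LR γ i).2, ih (i + 1),
        show i + 1 + ((n : ℕ) : ZMod (2 * γ.m)) = i + (((n + 1 : ℕ)) : ZMod (2 * γ.m)) from by
          push_cast; ring]
  have h := hiter (k - j).val j
  rwa [show (((k - j).val : ℕ) : ZMod (2 * γ.m)) = k - j from ZMod.natCast_rightInverse (k - j),
    add_comm, sub_add_cancel] at h

lemma dfun_mem (p : V) :
    dfun γ p = 0 ∨ dfun γ p = dfun γ (Lp γ 0) ∨ dfun γ p = dfun γ (Rp γ 0) := by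
  suffices h : ∀ (t : ℕ) (q : V), hiX γ ≤ q.1 + t →
      (dfun γ q = 0 ∨ dfun γ q = dfun γ (Lp γ 0) ∨ dfun γ q = dfun γ (Rp γ 0)) by
    refine h (hiX γ - p.1).toNat p ?_
    have := Int.self_le_toNat (hiX γ - p.1)
    omega
  intro t
  induction t with
  | zero =>
    intro q hq
    left
    apply dfun_right γ
    intro j
    have := le_hiX γ j
    simp at hq
    omega
  | succ n ih =>
    intro q hq
    by_cases hS : ((q + (1, 0), (1 : Fin 2)) : E) ∈ Set.range γ.ed
    · obtain ⟨j, hj⟩ := hS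
      have hbase : (γ.ed j).1 = q + (1, 0) := by rw [hj]
      have hdir : (γ.ed j).2 = 1 := by rw [hj]
      have hne0 : ¬((γ.ed j).2 = 0) := by rw [hdir]; decide
      by_cases hor : (γ.ed j).1 = γ.c j
      · right; left
        have hLj : Lp γ j = q := by
          rw [Lp, if_pos hor, if_neg hne0, hbase]
          apply eqVV <;> simp
        rw [dL_const γ 0 j, hLj]
      · right; right
        have hRj : Rp γ j = q := by
          rw [Rp, if_neg hor, if_neg hne0, hbase]
          apply eqVV <;> simp
        rw [dR_const γ 0 j, hRj]
    · have hstep : dfun γ q = dfun γ (q + (1, 0)) := by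
        have h2 := djump_v γ (q + (1, 0)) hS
        rwa [show q + ((1, 0) : V) - (1, 0) = q from by apply eqVV <;> simp] at h2
      rw [hstep]
      apply ih
      have : (q + ((1, 0) : V)).1 = q.1 + 1 := by simp
      omega

lemma exists_vertical : ∃ j, (γ.ed j).2 = 1 := by
  by_contra hno
  push_neg at hno
  have h0 : ∀ j, (γ.ed j).2 = 0 := by
    intro j
    rcases fin2 (γ.ed j).2 with h | h
    · exact h
    · exact absurd h (hno j)
  obtain ⟨j₀, -, hj₀⟩ := Finset.exists_max_image Finset.univ (fun j => (γ.c j).1)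
    ⟨0, Finset.mem_univ 0⟩
  have hmax : ∀ j, (γ.c j).1 ≤ (γ.c j₀).1 := fun j => hj₀ j (Finset.mem_univ j)
  have hA : γ.ed j₀ = ((γ.c j₀ - (1, 0)), (0 : Fin 2)) := by
    rcases γ.adj j₀ with ⟨h1, h2⟩ | ⟨h1, h2⟩
    · exfalso
      rw [h0 j₀, e_zero] at h2
      have hm := hmax (j₀ + 1)
      rw [← h2] at hm
      simp at hm
    · rw [h0 j₀, e_zero] at h2
      refine eqE ?_ (h0 j₀)
      rw [h1]
      have : γ.c (j₀ + 1) = γ.c j₀ - (1, 0) := by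
        rw [← h2]; apply eqVV <;> simp
      exact this
  have hB : γ.ed (j₀ - 1) = ((γ.c j₀ - (1, 0)), (0 : Fin 2)) := by
    rcases γ.adj (j₀ - 1) with ⟨h1, h2⟩ | ⟨h1, h2⟩
    · rw [sub_add_cancel, h0 _, e_zero] at h2
      refine eqE ?_ (h0 _)
      rw [h1]
      rw [← h2]; apply eqVV <;> simp
    · exfalso
      rw [sub_add_cancel] at h1 h2
      rw [h0 _, e_zero] at h2
      have hm := hmax (j₀ - 1)
      rw [← h2] at hm
      simp at hm
  have heq : γ.ed (j₀ - 1) = γ.ed ((j₀ - 1) + 1) := by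
    rw [sub_add_cancel, hA, hB]
  have halt := γ.alt (j₀ - 1)
  rw [← heq] at halt
  exact iff_not_self halt

lemma dfun_left (p : V) (hp : p.1 < loX γ) : dfun γ p = 0 := by
  have hrow : ∀ q : V, q.1 < loX γ → dfun γ q = dfun γ (loX γ - 1, q.2) := by
    intro q hq
    apply Finset.sum_congr rfl
    intro j _
    apply if_congr _ rfl rfl
    constructor
    · rintro ⟨h1, h2, h3⟩
      refine ⟨h1, h2, ?_⟩
      show loX γ - 1 < (γ.ed j).1.1
      have := loX_le γ j
      omega
    · rintro ⟨h1, h2, h3⟩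
      refine ⟨h1, h2, ?_⟩
      have := loX_le γ j
      omega
  have gstep : ∀ y : ℤ, dfun γ ((loX γ - 1 : ℤ), y - 1) = dfun γ ((loX γ - 1 : ℤ), y) := by
    intro y
    have hK : Kv γ (((loX γ - 1 : ℤ), y) : V) = 0 := by
      rw [Kv, if_neg]
      rintro ⟨j, hj⟩
      have h1 : (γ.ed j).1.1 = loX γ - 1 := by rw [hj]
      have := loX_le γ j
      omega
    have h2 := dfun_sub_e1 γ (M := M) (((loX γ - 1 : ℤ), y) : V)
    rw [hK, add_zero] at h2
    rwa [show (((loX γ - 1 : ℤ), y) : V) - (0, 1) = (((loX γ - 1 : ℤ), y - 1) : V) from by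
      apply eqVV <;> simp] at h2
  have gtop : ∀ y : ℤ, hiY γ < y → dfun γ ((loX γ - 1 : ℤ), y) = 0 := by
    intro y hy
    apply Finset.sum_eq_zero
    intro j _
    rw [if_neg]
    rintro ⟨h1, h2, h3⟩
    have h4 : (γ.ed j).1.2 = y := h2
    have := le_hiY γ j
    omega
  have gconst : ∀ (t : ℕ) (y : ℤ),
      dfun γ ((loX γ - 1 : ℤ), y) = dfun γ ((loX γ - 1 : ℤ), y + t) := by
    intro t
    induction t with
    | zero => intro y; norm_num
    | succ n ih =>
      intro y
      have h5 := gstep (y + 1)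
      rw [show y + 1 - 1 = y from by ring] at h5
      rw [h5, ih (y + 1), show y + 1 + (n : ℤ) = y + ((n : ℕ) + 1 : ℕ) from by push_cast; ring]
  have gzero : ∀ y : ℤ, dfun γ ((loX γ - 1 : ℤ), y) = 0 := by
    intro y
    rcases le_or_gt y (hiY γ) with hy | hy
    · rw [gconst (hiY γ + 1 - y).toNat y]
      apply gtop
      have := Int.self_le_toNat (hiY γ + 1 - y)
      omega
    · exact gtop y hy
  rw [hrow p hp]
  exact gzero p.2

lemma dfun_support : {x : V | dfun γ x ≠ 0}.Finite := by
  apply Set.Finite.subset (Set.finite_Icc ((loX γ, loY γ) : V) ((hiX γ, hiY γ) : V))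
  intro p hp
  simp only [Set.mem_setOf_eq] at hp
  by_cases h : ∃ j, (γ.ed j).2 = 1 ∧ (γ.ed j).1.2 = p.2 ∧ p.1 < (γ.ed j).1.1
  · obtain ⟨j, h1, h2, h3⟩ := h
    have hxlo : loX γ ≤ p.1 := by
      by_contra hc
      push_neg at hc
      exact hp (dfun_left γ p hc)
    rw [Set.mem_Icc, Prod.le_def, Prod.le_def]
    have hx := le_hiX γ j
    have hy1 := loY_le γ j
    have hy2 := le_hiY γ j
    exact ⟨⟨hxlo, by omega⟩, by omega, by omega⟩
  · exfalso
    apply hp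
    apply Finset.sum_eq_zero
    intro j _
    exact if_neg (fun hc => h ⟨j, hc⟩)

end LoopAux


/-- A loop update along a finite alternating cycle yields again a perfect
matching, and it shifts the heights uniformly by `+4` or by `-4` on a finite nonempty set of
plaquettes, leaving all other heights unchanged. -/
theorem loop_update_shifts_height_uniformly (M : Set E) (hM : IsPM M) (γ : AltCycle M)
    (h : V → ℤ) (hh : IsHeight M h) :
    IsPM (symmDiff M (Set.range γ.ed)) ∧
      ∃ δ ∈ ({4, -4} : Set ℤ), ∃ h' : V → ℤ,
        IsHeight (symmDiff M (Set.range γ.ed)) h' ∧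
        {x : V | h' x ≠ h x}.Finite ∧
        (∀ x : V, h' x - h x = 0 ∨ h' x - h x = δ) ∧
        (∃ x : V, h' x ≠ h x) := by
  constructor
  · -- new perfect matching
    intro w
    by_cases hcyc : ∃ j, w = γ.c j
    · obtain ⟨j, rfl⟩ := hcyc
      set i := j - 1 with hi
      have hji : i + 1 = j := sub_add_cancel j 1
      have hx_in : γ.c j = (γ.ed i).1 ∨ γ.c j = (γ.ed i).1 + e (γ.ed i).2 := by
        rcases γ.adj i with ⟨h1, h2⟩ | ⟨h1, h2⟩
        · right
          rw [hji] at h2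
          rw [h1]
          exact h2.symm
        · left; rw [hji] at h1; exact h1.symm
      have hy_in : γ.c j = (γ.ed j).1 ∨ γ.c j = (γ.ed j).1 + e (γ.ed j).2 := by
        rcases γ.adj j with ⟨h1, h2⟩ | ⟨h1, h2⟩
        · left; exact h1.symm
        · right; rw [h1]; exact h2.symm
      have halt : γ.ed i ∈ M ↔ γ.ed j ∉ M := by
        have halt0 := γ.alt i; rwa [hji] at halt0
      have hxe : γ.c j ∈ ends (γ.ed i) := by
        simp only [ends, Set.mem_insert_iff, Set.mem_singleton_iff]; exact hx_in
      have hye : γ.c j ∈ ends (γ.ed j) := by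
        simp only [ends, Set.mem_insert_iff, Set.mem_singleton_iff]; exact hy_in
      have only_two : ∀ q : E, q ∈ Set.range γ.ed → γ.c j ∈ ends q →
          q = γ.ed i ∨ q = γ.ed j := by
        rintro q ⟨k, rfl⟩ hq
        have hq' : γ.c j = (γ.ed k).1 ∨ γ.c j = (γ.ed k).1 + e (γ.ed k).2 := by
          simpa only [ends, Set.mem_insert_iff, Set.mem_singleton_iff] using hq
        rcases ed_cases γ j k hq' with hkj | hkj
        · right; rw [hkj]
        · left
          have hki : k = i := by rw [hi, ← hkj]; ring
          rw [hki]
      by_cases hxM : γ.ed i ∈ M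
      · have hyM : γ.ed j ∉ M := halt.mp hxM
        refine ⟨γ.ed j, ⟨Set.mem_symmDiff.mpr (Or.inr ⟨⟨j, rfl⟩, hyM⟩), hye⟩, ?_⟩
        rintro q ⟨hqmem, hqend⟩
        rcases Set.mem_symmDiff.mp hqmem with ⟨hqM, hqS⟩ | ⟨hqS, hqM⟩
        · exfalso
          obtain ⟨u, -, hu2⟩ := hM (γ.c j)
          have e1 := hu2 q ⟨hqM, hqend⟩
          have e2 := hu2 (γ.ed i) ⟨hxM, hxe⟩
          exact hqS ⟨i, (e1.trans e2.symm).symm⟩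
        · rcases only_two q hqS hqend with rfl | rfl
          · exact absurd hxM hqM
          · rfl
      · have hyM : γ.ed j ∈ M := by
          by_contra hc
          exact hxM (halt.mpr hc)
        refine ⟨γ.ed i, ⟨Set.mem_symmDiff.mpr (Or.inr ⟨⟨i, rfl⟩, hxM⟩), hxe⟩, ?_⟩
        rintro q ⟨hqmem, hqend⟩
        rcases Set.mem_symmDiff.mp hqmem with ⟨hqM, hqS⟩ | ⟨hqS, hqM⟩
        · exfalso
          obtain ⟨u, -, hu2⟩ := hM (γ.c j)
          have e1 := hu2 q ⟨hqM, hqend⟩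
          have e2 := hu2 (γ.ed j) ⟨hyM, hye⟩
          exact hqS ⟨j, (e1.trans e2.symm).symm⟩
        · rcases only_two q hqS hqend with rfl | rfl
          · rfl
          · exact absurd hyM hqM
    · push_neg at hcyc
      obtain ⟨u, ⟨huM, huend⟩, hu2⟩ := hM w
      have huS : u ∉ Set.range γ.ed := notS_off γ w hcyc u
        (by simpa only [ends, Set.mem_insert_iff, Set.mem_singleton_iff] using huend)
      refine ⟨u, ⟨Set.mem_symmDiff.mpr (Or.inl ⟨huM, huS⟩), huend⟩, ?_⟩
      rintro q ⟨hqmem, hqend⟩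
      rcases Set.mem_symmDiff.mp hqmem with ⟨hqM, -⟩ | ⟨hqS, -⟩
      · exact hu2 q ⟨hqM, hqend⟩
      · exact absurd hqS (notS_off γ w hcyc q
          (by simpa only [ends, Set.mem_insert_iff, Set.mem_singleton_iff] using hqend))
  · -- the height shift
    obtain ⟨jv, hjv⟩ := exists_vertical γ
    obtain ⟨j₁, hj₁T, hj₁max⟩ := Finset.exists_max_image
      (Finset.univ.filter fun j => (γ.ed j).2 = 1) (fun j => (γ.ed j).1.1)
      ⟨jv, by simp [hjv]⟩
    have hj₁dir : (γ.ed j₁).2 = 1 := (Finset.mem_filter.mp hj₁T).2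
    set v₁ := (γ.ed j₁).1 with hv₁
    have hv₁S : ((v₁, (1 : Fin 2)) : E) ∈ Set.range γ.ed := ⟨j₁, eqE rfl hj₁dir⟩
    have heast : dfun γ v₁ = 0 := by
      apply Finset.sum_eq_zero
      intro j _
      rw [if_neg]
      rintro ⟨h1, h2, h3⟩
      have h4 : (γ.ed j).1.1 ≤ v₁.1 :=
        hj₁max j (Finset.mem_filter.mpr ⟨Finset.mem_univ j, h1⟩)
      omega
    have hwest : dfun γ (v₁ - (1, 0)) = Jv γ v₁ := by
      rw [dfun_sub_e0, heast, zero_add]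
    have hJval : Jv γ v₁ = (if ((v₁, (1 : Fin 2)) : E) ∈ M then -4 else 4) * eps v₁ := by
      rw [Jv, if_pos hv₁S]
    have hδmem : Jv γ v₁ = 4 ∨ Jv γ v₁ = -4 := by
      rw [hJval, eps]
      split_ifs <;> norm_num
    have hne0 : ¬((γ.ed j₁).2 = 0) := by rw [hj₁dir]; decide
    have hsides : (Lp γ j₁ = v₁ - (1, 0) ∧ Rp γ j₁ = v₁) ∨
        (Lp γ j₁ = v₁ ∧ Rp γ j₁ = v₁ - (1, 0)) := by
      by_cases hor : (γ.ed j₁).1 = γ.c j₁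
      · left
        exact ⟨by rw [Lp, if_pos hor, if_neg hne0], by rw [Rp, if_pos hor, if_neg hne0]⟩
      · right
        exact ⟨by rw [Lp, if_neg hor, if_neg hne0], by rw [Rp, if_neg hor, if_neg hne0]⟩
    have hrange : ∀ p : V, dfun γ p = 0 ∨ dfun γ p = Jv γ v₁ := by
      intro p
      rcases dfun_mem γ p with h0 | h0 | h0
      · exact Or.inl h0
      · rw [h0, dL_const γ 0 j₁]
        rcases hsides with ⟨h1, -⟩ | ⟨h1, -⟩
        · right; rw [h1, hwest]
        · left; rw [h1, heast]
      · rw [h0, dR_const γ 0 j₁]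
        rcases hsides with ⟨-, h2⟩ | ⟨-, h2⟩
        · left; rw [h2, heast]
        · right; rw [h2, hwest]
    refine ⟨Jv γ v₁, by rcases hδmem with h0 | h0 <;> rw [h0] <;> simp,
      fun p => h p + dfun γ p, ?_, ?_, ?_, ?_⟩
    · -- height function property
      intro v
      obtain ⟨H1, H2⟩ := hh v
      constructor
      · show (h (v - (0, 1)) + dfun γ (v - (0, 1))) - (h v + dfun γ v) = _
        have hd := dfun_sub_e1 γ (M := M) v
        have expand : (h (v - (0, 1)) + dfun γ (v - (0, 1))) - (h v + dfun γ v)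
            = (h (v - (0, 1)) - h v) + Kv γ v := by rw [hd]; ring
        rw [expand, H1, Kv]
        by_cases hS : ((v, (0 : Fin 2)) : E) ∈ Set.range γ.ed <;>
          by_cases hMm : ((v, (0 : Fin 2)) : E) ∈ M <;>
          simp only [Set.mem_symmDiff, hS, hMm, if_true, if_false, not_true, not_false_iff,
            and_true, and_false, true_and, false_and, or_false, false_or, if_pos, if_neg,
            not_false_eq_true, and_self, or_self] <;>
          first
          | ring
          | (split_ifs <;> first | ring | tauto)
      · show (h (v - (1, 0)) + dfun γ (v - (1, 0))) - (h v + dfun γ v) = _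
        have hd := dfun_sub_e0 γ (M := M) v
        have expand : (h (v - (1, 0)) + dfun γ (v - (1, 0))) - (h v + dfun γ v)
            = (h (v - (1, 0)) - h v) + Jv γ v := by rw [hd]; ring
        rw [expand, H2, Jv]
        by_cases hS : ((v, (1 : Fin 2)) : E) ∈ Set.range γ.ed <;>
          by_cases hMm : ((v, (1 : Fin 2)) : E) ∈ M <;>
          simp only [Set.mem_symmDiff, hS, hMm, if_true, if_false, not_true, not_false_iff,
            and_true, and_false, true_and, false_and, or_false, false_or, if_pos, if_neg,
            not_false_eq_true, and_self, or_self] <;>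
          first
          | ring
          | (split_ifs <;> first | ring | tauto)
    · -- finiteness
      apply Set.Finite.subset (dfun_support γ)
      intro x hx
      simp only [Set.mem_setOf_eq] at hx ⊢
      intro hc
      exact hx (by rw [hc, add_zero])
    · -- values 0 or δ
      intro x
      rcases hrange x with h0 | h0
      · left; rw [show (h x + dfun γ x) - h x = dfun γ x from by ring, h0]
      · right; rw [show (h x + dfun γ x) - h x = dfun γ x from by ring, h0]
    · -- not identically zero
      refine ⟨v₁ - (1, 0), ?_⟩
      show h (v₁ - (1, 0)) + dfun γ (v₁ - (1, 0)) ≠ h (v₁ - (1, 0))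
      rw [hwest]
      rcases hδmem with h0 | h0 <;> rw [h0] <;> omega

end HQDM
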